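/- arXiv:0803.3980 — 3 statements merged into one kernel-verified Lean document; each statement's English description precedes it below -/
import Mathlib

section
/- For a list λ = (λ_1,…,λ_n) of integers with n ≥ 2, define 𝒴(λ) := ∏_{i=1}^n Y(λ_i - i + 1, λ_i). For each j with 1 ≤ j ≤ n-1, let Δ_j λ := (λ_1,…,λ_{j-1}, λ_{j+1}-1, λ_j+1, λ_{j+2},…,λ_n). Then 𝒴(Δ_j λ) = 𝒴(λ). -/
/-- `Yprod y m k` is the product `y_m · y_{m-1} ⋯ y_{m+1-k}` for `k ≥ 1`,
`1` for `k = 0`, and `Y(m-k,-k)⁻¹` for `k ≤ -1`. -/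
noncomputable def Yprod {R : Type*} [CommRing R] (y : ℤ → Rˣ) (m k : ℤ) : Rˣ :=
  if 0 ≤ k then ∏ j ∈ Finset.range k.toNat, y (m - j)
  else (∏ j ∈ Finset.range (-k).toNat, y ((m - k) - j))⁻¹

/-- `𝒴(λ) = ∏_{i=1}^n Y(λ_i - i + 1, λ_i)` for a list `λ` of `n` integers,
here `0`-indexed: `l i` is `λ_{i+1}`, so `λ_i - i + 1` becomes `l i - i`. -/
noncomputable def calY {R : Type*} [CommRing R] (y : ℤ → Rˣ) (n : ℕ) (l : ℕ → ℤ) : Rˣ :=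
  ∏ i ∈ Finset.range n, Yprod y (l i - i) (l i)

/-- `Δ_j λ = (λ_1,…,λ_{j-1}, λ_{j+1}-1, λ_j+1, λ_{j+2},…,λ_n)`,
`0`-indexed: position `j` (`0`-indexed) gets `λ_{j+2}-1` etc. -/
def Delta (j : ℕ) (l : ℕ → ℤ) : ℕ → ℤ := fun i =>
  if i = j then l (j + 1) - 1 else if i = j + 1 then l j + 1 else l i

/-
Since `Y(m, k + 1) = Y(m, k) · y_{m-k}` for every integer `k`, negative ones included, the
factor of row `j + 1` of `Δ_j λ`, `Y(λ_j - j + 1, λ_j + 1)`, is the factor of row `j` of `λ`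
times `y_{1-j}`, while the factor of row `j` of `Δ_j λ`, `Y(λ_{j+1} - j, λ_{j+1} - 1)`, is the
factor of row `j + 1` of `λ` divided by the same `y_{1-j}`. All other factors agree.
-/

theorem Finset.prod_eq_prod_of_eqOn_compl_pair {ι M : Type*} [DecidableEq ι] [CommMonoid M]
    {s : Finset ι} {f g : ι → M} {a b : ι} (ha : a ∈ s) (hb : b ∈ s) (hab : a ≠ b)
    (hpair : f a * f b = g a * g b) (hrest : ∀ i ∈ s, i ≠ a → i ≠ b → f i = g i) :
    ∏ i ∈ s, f i = ∏ i ∈ s, g i := by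
  have hsub : {a, b} ⊆ s := Finset.insert_subset ha (Finset.singleton_subset_iff.mpr hb)
  rw [← Finset.prod_sdiff hsub, ← Finset.prod_sdiff hsub, Finset.prod_pair hab,
    Finset.prod_pair hab, hpair]
  congr 1
  refine Finset.prod_congr rfl fun i hi => ?_
  simp only [Finset.mem_sdiff, Finset.mem_insert, Finset.mem_singleton, not_or] at hi
  exact hrest i hi.1 hi.2.1 hi.2.2

section Yprod

variable {R : Type*} [CommRing R] (y : ℤ → Rˣ)

theorem Yprod_add_one (m k : ℤ) : Yprod y m (k + 1) = Yprod y m k * y (m - k) := by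
  rcases le_or_gt 0 k with hk | hk
  · rw [Yprod, Yprod, if_pos (by omega), if_pos hk, show (k + 1).toNat = k.toNat + 1 by omega,
      Finset.prod_range_succ, Int.toNat_of_nonneg hk]
  · obtain rfl | hk' := eq_or_lt_of_le (show k ≤ -1 by omega)
    · simp [Yprod]
    · rw [Yprod, Yprod, if_neg (by omega), if_neg (by omega),
        show (-k).toNat = (-(k + 1)).toNat + 1 by omega, Finset.prod_range_succ']
      have hshift (t : ℕ) : m - k - ((t + 1 : ℕ) : ℤ) = m - (k + 1) - t := by push_cast; ring
      simp only [hshift, Nat.cast_zero, sub_zero, mul_inv_rev]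
      rw [mul_comm (y (m - k))⁻¹, inv_mul_cancel_right]

theorem Yprod_mul_Yprod_shift (a b i : ℤ) :
    Yprod y (b - 1 - i) (b - 1) * Yprod y (a + 1 - (i + 1)) (a + 1) =
      Yprod y (a - i) a * Yprod y (b - (i + 1)) b := by
  have hb := Yprod_add_one y (b - 1 - i) (b - 1)
  rw [sub_add_cancel, show b - 1 - i - (b - 1) = -i by ring] at hb
  rw [show a + 1 - (i + 1) = a - i by ring, Yprod_add_one, show a - i - a = -i by ring,
    show b - (i + 1) = b - 1 - i by ring, hb]
  ac_rfl

end Yprod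

theorem stmt1_general {R : Type*} [CommRing R] (y : ℤ → Rˣ) (n : ℕ)
    (l : ℕ → ℤ) (j : ℕ) (hj : j + 1 < n) :
    calY y n (Delta j l) = calY y n l := by
  refine Finset.prod_eq_prod_of_eqOn_compl_pair (a := j) (b := j + 1)
    (Finset.mem_range.mpr (by omega)) (Finset.mem_range.mpr hj) (by omega) ?_ ?_
  · simp only [Delta, if_pos, if_neg (Nat.succ_ne_self j), Nat.cast_add, Nat.cast_one]
    exact Yprod_mul_Yprod_shift y (l j) (l (j + 1)) j
  · intro i _ hij hij1
    simp only [Delta, if_neg hij, if_neg hij1]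

/-- For a list `λ` of `n ≥ 2` integers and `1 ≤ j ≤ n-1` (here `0`-indexed:
`j + 1 < n`), one has `𝒴(Δ_j λ) = 𝒴(λ)`. -/
theorem stmt1 {R : Type*} [CommRing R] (y : ℤ → Rˣ) (n : ℕ) (hn : 2 ≤ n)
    (l : ℕ → ℤ) (j : ℕ) (hj : j + 1 < n) :
    calY y n (Delta j l) = calY y n l :=
  stmt1_general y n l j hj
end

section
/- If T is the formal power series solution of T = z(p_1 + p_3 T²) with T(0)=0, then 1/(1 - 2 p_3 z T) = 1/√(1 - 4 p_1 p_3 z²), i.e., (1 - 2p_3zT)·S = 1 where S is the formal power series inverse square root of 1 - 4p_1p_3z², equivalently (1-2p_3zT)² = 1 - 4p_1p_3z². -/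
open PowerSeries

/-- Coefficient ring `ℚ[p₁, p₃]`: `p₁` is `X 0`, `p₃` is `X 1`. -/
noncomputable abbrev Rp : Type := MvPolynomial (Fin 2) ℚ

noncomputable abbrev p1 : Rp := MvPolynomial.X 0
noncomputable abbrev p3 : Rp := MvPolynomial.X 1

/-- `T` is a formal power series in `z` over `ℚ[p₁,p₃]` with zero constant
term satisfying the functional equation `T = z(p₁ + p₃ T²)`. -/
def IsTreeSeries (T : PowerSeries Rp) : Prop :=
  PowerSeries.constantCoeff T = 0 ∧
    T = PowerSeries.X * (PowerSeries.C p1 + PowerSeries.C p3 * T ^ 2)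

/-- The quadratic `t = z (a + b t²)` has discriminant `1 - 4abz²`, and `1 - 2bzt` is its square
root. -/
theorem one_sub_two_mul_sq_of_eq_mul_add_mul_sq {R : Type*} [CommRing R] {a b z t : R}
    (ht : t = z * (a + b * t ^ 2)) :
    (1 - 2 * b * z * t) ^ 2 = 1 - 4 * a * b * z ^ 2 := by
  linear_combination (-4 * b * z) * ht

/-- If `T` is the formal power series solution of `T = z(p₁ + p₃T²)` with
`T(0) = 0`, then `1/(1-2p₃zT) = 1/√(1-4p₁p₃z²)`; equivalently
`(1 - 2p₃zT)² = 1 - 4p₁p₃z²`. -/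
theorem stmt10 (T : PowerSeries Rp) (hT : IsTreeSeries T) :
    (1 - 2 * PowerSeries.C p3 * PowerSeries.X * T) ^ 2 =
      1 - 4 * PowerSeries.C p1 * PowerSeries.C p3 * PowerSeries.X ^ 2 :=
  one_sub_two_mul_sq_of_eq_mul_add_mul_sq hT.2
end

section
/- With the definitions b_{γ^{(k)}} = 𝒴(γ^{(k)}) s_{γ^{(k)}} given via the Jacobi–Trudi determinant (h's indexed by possibly negative integers, with h_r = 0 for r < 0), the alternating sum ∑_{k=0}^{m} (-1)^k s_{γ^{(k)}} s_{δ^{(k)}} = 0, where γ^{(k)} = (α_1-1,…,α_{m-1}-1, β_{k+1}+m-k) and δ^{(k)} = (β_1+1,…,β_k+1, β_{k+2},…,β_{m+1}), the s of a list of n integers ν being defined as det(h_{ν_i - i + j})_{1≤i,j≤n}. That is, the generalized Schur functions satisfy the single Plücker relation ∑_{k=0}^m (-1)^k s_{γ^{(k)}} s_{δ^{(k)}} = 0 for any integers α_1,…,α_{m-1}, β_1,…,β_{m+1} and m ≥ 1. -/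
/-- The generalized Schur function of an arbitrary integer list
`ν = (ν_1,…,ν_n)`, defined via the Jacobi–Trudi determinant
`s_ν = det(h_{ν_i - i + j})_{1≤i,j≤n}`, for a family `h : ℤ → R`. -/
noncomputable def sJT {R : Type*} [CommRing R] (h : ℤ → R) {n : ℕ}
    (ν : Fin n → ℤ) : R :=
  Matrix.det (Matrix.of fun i j : Fin n => h (ν i - (i : ℕ) + (j : ℕ)))

/-!
Write the rows of the Jacobi–Trudi matrices as `u_t = (h_{β_t + 1 - t + j})_j` for
`t = 0,…,m`. The matrix of `s_{δ⁽ᵏ⁾}` consists of the rows `u_t` with `t ≠ k`, and that of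
`s_{γ⁽ᵏ⁾}` is the fixed block `A = (h_{α_i - 1 - i + j})` followed by the row `u_k`. The
`(m + 1) × (m + 1)` matrix with columns `(u_{·j}, u_{·0}, …, u_{·(m-1)})` has two equal columns;
expanding its determinant along the first one gives the vector identity
`∑_k (-1)^k s_{δ⁽ᵏ⁾} u_k = 0`. Applying to it the linear form `v ↦ det(A; v)` yields the relation.
-/

namespace Matrix

variable {R : Type*} [CommRing R] {n : ℕ}

theorem sum_neg_one_pow_mul_det_succAbove_smul_eq_zero
    (u : Fin (n + 2) → Fin (n + 1) → R) :
    ∑ k : Fin (n + 2), ((-1 : R) ^ (k : ℕ) * det (of fun i => u (k.succAbove i))) • u k = 0 := by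
  ext j
  let N : Matrix (Fin (n + 2)) (Fin (n + 2)) R := of fun t => Fin.cons (u t j) (u t)
  have hN : det N = 0 := det_zero_of_column_eq (Fin.succ_ne_zero j).symm fun t => rfl
  rw [det_succ_column_zero] at hN
  rw [Finset.sum_apply, Pi.zero_apply, ← hN]
  refine Finset.sum_congr rfl fun k _ => ?_
  simp only [Pi.smul_apply, smul_eq_mul, N, of_apply, Fin.cons_zero]
  rw [mul_right_comm]
  rfl

theorem sum_neg_one_pow_mul_det_snoc_mul_det_succAbove
    (A : Fin n → Fin (n + 1) → R) (u : Fin (n + 2) → Fin (n + 1) → R) :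
    ∑ k : Fin (n + 2), (-1 : R) ^ (k : ℕ) * det (of (Fin.snoc A (u k))) *
      det (of fun i => u (k.succAbove i)) = 0 := by
  let L := (detRowAlternating (n := Fin (n + 1)) (R := R)).toMultilinearMap.toLinearMap
    (Fin.snoc A 0) (Fin.last n)
  have hL : ∀ v, L v = det (of (Fin.snoc A v)) := fun v => by
    simp only [L, MultilinearMap.toLinearMap_apply, Fin.update_snoc_last]
    rfl
  calc _ = L (∑ k : Fin (n + 2),
        ((-1 : R) ^ (k : ℕ) * det (of fun i => u (k.succAbove i))) • u k) := by
        rw [map_sum]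
        refine Finset.sum_congr rfl fun k _ => ?_
        rw [map_smul, hL, smul_eq_mul]
        ring
    _ = 0 := by rw [sum_neg_one_pow_mul_det_succAbove_smul_eq_zero, map_zero]

end Matrix

open Matrix

theorem stmt15_general {R : Type*} [CommRing R] (h : ℤ → R)
    (m : ℕ) (hm : 1 ≤ m) (α : Fin (m - 1) → ℤ) (β : Fin (m + 1) → ℤ) :
    ∑ k : Fin (m + 1), (-1 : R) ^ (k : ℕ) *
        sJT h (fun i : Fin m =>
          if hi : (i : ℕ) < m - 1 then α ⟨i, hi⟩ - 1
          else β k + (m : ℤ) - (k : ℕ)) *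
        sJT h (fun i : Fin m =>
          if (i : ℕ) < (k : ℕ) then β (Fin.castSucc i) + 1 else β i.succ) = 0 := by
  obtain ⟨n, rfl⟩ : ∃ n, m = n + 1 := ⟨m - 1, (Nat.succ_pred_eq_of_pos hm).symm⟩
  let row : ℤ → Fin (n + 1) → R := fun c j => h (c + j)
  let u : Fin (n + 2) → Fin (n + 1) → R := fun t => row (β t + 1 - t)
  rw [← sum_neg_one_pow_mul_det_snoc_mul_det_succAbove (fun i : Fin n => row (α i - 1 - i)) u]
  refine Finset.sum_congr rfl fun k _ => ?_
  congr 2 <;> unfold sJT <;> congr 1 <;> ext i j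
  · refine Fin.lastCases ?_ (fun i => ?_) i
    · simp only [of_apply, Fin.val_last, Nat.add_sub_cancel, lt_irrefl, dite_false,
        Fin.snoc_last, u, row]
      congr 1
      push_cast
      ring
    · simp [row]
  · by_cases hik : (i : ℕ) < k
    · simp [hik, u, row, Fin.succAbove_of_castSucc_lt _ _ (Fin.castSucc_lt_iff_succ_le.mpr hik)]
    · have hki : k ≤ i.castSucc := by simpa [Fin.le_def] using hik
      simp [hik, u, row, Fin.succAbove_of_le_castSucc _ _ hki]

/-- The Plücker relation for generalized Schur functions: with
`h_r = 0` for `r < 0`, and for any `m ≥ 1` and integers `α_1,…,α_{m-1}`,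
`β_1,…,β_{m+1}`, setting `γ⁽ᵏ⁾ = (α_1-1,…,α_{m-1}-1, β_{k+1}+m-k)` and
`δ⁽ᵏ⁾ = (β_1+1,…,β_k+1, β_{k+2},…,β_{m+1})` for `k = 0,…,m`, one has
`∑_{k=0}^m (-1)^k s_{γ⁽ᵏ⁾} s_{δ⁽ᵏ⁾} = 0`. -/
theorem stmt15 {R : Type*} [CommRing R] (h : ℤ → R)
    (hneg : ∀ r : ℤ, r < 0 → h r = 0)
    (m : ℕ) (hm : 1 ≤ m) (α : Fin (m - 1) → ℤ) (β : Fin (m + 1) → ℤ) :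
    ∑ k : Fin (m + 1), (-1 : R) ^ (k : ℕ) *
        sJT h (fun i : Fin m =>
          if hi : (i : ℕ) < m - 1 then α ⟨i, hi⟩ - 1
          else β k + (m : ℤ) - (k : ℕ)) *
        sJT h (fun i : Fin m =>
          if (i : ℕ) < (k : ℕ) then β (Fin.castSucc i) + 1 else β i.succ) = 0 :=
  stmt15_general h m hm α β
end
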